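/- Kantorovich's theorem on the Newton method (simplified form): let f : ℝ → ℝ be twice continuously differentiable on an interval containing x₀, with |f''| ≤ K on the interval, f'(x₀) ≠ 0, |1/f'(x₀)| ≤ B, and |f(x₀)/f'(x₀)| ≤ η. If h := KBη ≤ 1/2 and the closed ball of radius (1 - √(1-2h))/(KB) around x₀ is contained in the interval, then the Newton iteration x_{n+1} = x_n - f(x_n)/f'(x_n) is well-defined, stays in this ball, and converges to a root of f. -/

import Mathlib

/-!
Compare the iterates `xₙ` with Newton's iteration `tₙ` for the majorant polynomial
`φ t = K B / 2 * t ^ 2 - t + η`, started at `0`. As long as `|xₙ - x₀| ≤ tₙ`, the bound on `f''`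
keeps `|f' xₙ| ≥ (1 - K B tₙ) / B`, and the residual `f xₙ₊₁` is a Taylor remainder of size at
most `K / 2 * (tₙ₊₁ - tₙ) ^ 2`; together these give `|xₙ₊₂ - xₙ₊₁| ≤ tₙ₊₂ - tₙ₊₁`. The `tₙ`
increase to the smaller root `(1 - √(1 - 2 K B η)) / (K B)` of `φ`, so `(xₙ)` is Cauchy in the
ball, and its limit is a root since `f xₙ = f' xₙ * (xₙ - xₙ₊₁) → 0`.
-/

open Filter Set Metric Topology

theorem Convex.norm_sub_sub_smul_le_of_lipschitz_deriv {E : Type*} [NormedAddCommGroup E]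
    [NormedSpace ℝ E] {f f' : ℝ → E} {D : Set ℝ} {K a b : ℝ} (hD : Convex ℝ D)
    (hf : ∀ x ∈ D, HasDerivAt f (f' x) x) (ha : a ∈ D) (hb : b ∈ D)
    (hlip : ∀ x ∈ D, ‖f' x - f' a‖ ≤ K * |x - a|) :
    ‖f b - f a - (b - a) • f' a‖ ≤ K / 2 * (b - a) ^ 2 := by
  set v := b - a
  have hmem : ∀ θ ∈ Icc (0 : ℝ) 1, a + θ * v ∈ D := fun θ hθ => by
    simpa [v, smul_eq_mul] using hD.add_smul_sub_mem ha hb hθ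
  let g : ℝ → E := fun θ => f (a + θ * v) - f a - (θ * v) • f' a
  have hg : ∀ θ ∈ Icc (0 : ℝ) 1, HasDerivAt g (v • (f' (a + θ * v) - f' a)) θ := by
    intro θ hθ
    have hline : HasDerivAt (fun θ : ℝ => a + θ * v) v θ := (hasDerivAt_mul_const v).const_add a
    rw [smul_sub]
    exact (((hf _ (hmem θ hθ)).scomp θ hline).sub_const (f a)).sub
      ((hasDerivAt_mul_const v).smul_const (f' a))
  have hbound := image_norm_le_of_norm_deriv_right_le_deriv_boundary (a := 0) (b := 1)
    (f := g) (B := fun θ => K / 2 * v ^ 2 * θ ^ 2) (B' := fun θ => K * v ^ 2 * θ)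
    (fun θ hθ => (hg θ hθ).continuousAt.continuousWithinAt)
    (fun θ hθ => (hg θ (Ico_subset_Icc_self hθ)).hasDerivWithinAt)
    (by simp [g])
    (fun θ => by simpa using ((hasDerivAt_pow 2 θ).const_mul (K / 2 * v ^ 2)).congr_deriv (by ring))
    (fun θ hθ => calc
      ‖v • (f' (a + θ * v) - f' a)‖ ≤ |v| * (K * |a + θ * v - a|) := by
        rw [norm_smul, Real.norm_eq_abs]
        exact mul_le_mul_of_nonneg_left (hlip _ (hmem θ (Ico_subset_Icc_self hθ))) (abs_nonneg v)
      _ = K * v ^ 2 * θ := by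
        rw [add_sub_cancel_left, abs_mul, abs_of_nonneg hθ.1, ← sq_abs v]; ring)
    (right_mem_Icc.2 zero_le_one)
  simpa [g, v] using hbound

noncomputable def kantorovichMajorant (c η t : ℝ) : ℝ := c / 2 * t ^ 2 - t + η

/-- Newton's iteration for `kantorovichMajorant c η`, whose derivative is `c * t - 1`, from `0`. -/
noncomputable def kantorovichSeq (c η : ℝ) : ℕ → ℝ
  | 0 => 0
  | n + 1 => kantorovichSeq c η n +
      kantorovichMajorant c η (kantorovichSeq c η n) / (1 - c * kantorovichSeq c η n)

namespace kantorovichSeq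

variable {c η : ℝ}

@[simp] theorem zero : kantorovichSeq c η 0 = 0 := rfl

theorem succ (n : ℕ) : kantorovichSeq c η (n + 1) = kantorovichSeq c η n +
    kantorovichMajorant c η (kantorovichSeq c η n) / (1 - c * kantorovichSeq c η n) := rfl

@[simp] theorem one : kantorovichSeq c η 1 = η := by simp [succ, kantorovichMajorant]

theorem mul_one_sub_mul_succ {n : ℕ} (h : 1 - c * kantorovichSeq c η n ≠ 0) :
    2 * (1 - c * kantorovichSeq c η n) * (1 - c * kantorovichSeq c η (n + 1)) =
      (1 - c * kantorovichSeq c η n) ^ 2 + (1 - 2 * (c * η)) := by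
  rw [succ, kantorovichMajorant]; field_simp; ring

theorem kantorovichMajorant_succ {n : ℕ} (h : 1 - c * kantorovichSeq c η n ≠ 0) :
    kantorovichMajorant c η (kantorovichSeq c η (n + 1)) =
      c / 2 * (kantorovichSeq c η (n + 1) - kantorovichSeq c η n) ^ 2 := by
  rw [kantorovichMajorant, succ, kantorovichMajorant]; field_simp; ring

theorem sqrt_le_one_sub_mul (hcη₀ : 0 ≤ c * η) (hcη : c * η ≤ 1 / 2) (n : ℕ) :
    √(1 - 2 * (c * η)) ≤ 1 - c * kantorovichSeq c η n ∧ 0 < 1 - c * kantorovichSeq c η n := by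
  set s := √(1 - 2 * (c * η))
  have hs : s ^ 2 = 1 - 2 * (c * η) := Real.sq_sqrt (by linarith)
  have hs₀ : 0 ≤ s := Real.sqrt_nonneg _
  -- in `u = 1 - c t` the iteration is Heron's `u ↦ (u ^ 2 + s ^ 2) / (2 u)`, which stays above `s`
  have heron {u u' : ℝ} (hu : 0 < u) (h : 2 * u * u' = u ^ 2 + s ^ 2) : s ≤ u' ∧ 0 < u' := by
    have hsu' : 0 ≤ 2 * u * (u' - s) := by nlinarith [sq_nonneg (u - s)]
    have hs' : s ≤ u' := by nlinarith
    exact ⟨hs', by nlinarith⟩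
  induction n with
  | zero => simp only [zero, mul_zero, sub_zero]; exact ⟨by nlinarith, one_pos⟩
  | succ n ih => exact heron ih.2 (hs ▸ mul_one_sub_mul_succ ih.2.ne')

theorem monotone (hc : 0 < c) (hcη₀ : 0 ≤ c * η) (hcη : c * η ≤ 1 / 2) :
    Monotone (kantorovichSeq c η) := by
  refine monotone_nat_of_le_succ fun n => ?_
  obtain ⟨hsu, hu⟩ := sqrt_le_one_sub_mul hcη₀ hcη n
  have hs : √(1 - 2 * (c * η)) ^ 2 = 1 - 2 * (c * η) := Real.sq_sqrt (by linarith)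
  have key := mul_one_sub_mul_succ hu.ne'
  have : c * kantorovichSeq c η n ≤ c * kantorovichSeq c η (n + 1) := by
    nlinarith [mul_le_mul hsu hsu (Real.sqrt_nonneg _) hu.le]
  exact le_of_mul_le_mul_left this hc

theorem le_div (hc : 0 < c) (hcη₀ : 0 ≤ c * η) (hcη : c * η ≤ 1 / 2) (n : ℕ) :
    kantorovichSeq c η n ≤ (1 - √(1 - 2 * (c * η))) / c := by
  rw [le_div_iff₀ hc]
  linarith [(sqrt_le_one_sub_mul hcη₀ hcη n).1]

end kantorovichSeq

theorem cauchySeq_of_dist_le_sub_of_monotone {α : Type*} [PseudoMetricSpace α] {x : ℕ → α}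
    {t : ℕ → ℝ} {r : ℝ} (ht : Monotone t) (htr : ∀ n, t n ≤ r)
    (hx : ∀ n, dist (x n) (x (n + 1)) ≤ t (n + 1) - t n) : CauchySeq x := by
  refine cauchySeq_of_dist_le_of_summable _ hx (summable_of_sum_range_le (c := r - t 0)
    (fun n => sub_nonneg.2 (ht n.le_succ)) fun n => ?_)
  rw [Finset.sum_range_sub]
  linarith [htr n]

theorem eq_zero_of_tendsto_newton {𝕜 : Type*} [NormedField 𝕜] {f f' : 𝕜 → 𝕜} {x : ℕ → 𝕜}
    {a : 𝕜} (hx : ∀ n, x (n + 1) = x n - f (x n) / f' (x n)) (hne : ∀ n, f' (x n) ≠ 0)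
    (hlim : Tendsto x atTop (𝓝 a)) (hf : ContinuousAt f a) (hf' : ContinuousAt f' a) :
    f a = 0 := by
  have hres : ∀ n, f (x n) = f' (x n) * (x n - x (n + 1)) := fun n => by
    rw [hx n, sub_sub_cancel, mul_div_cancel₀ _ (hne n)]
  have h := (hf'.tendsto.comp hlim).mul (hlim.sub (hlim.comp (tendsto_add_atTop_nat 1)))
  rw [sub_self, mul_zero] at h
  exact tendsto_nhds_unique (hf.tendsto.comp hlim) (h.congr fun n => (hres n).symm)

theorem abs_newton_sub_le_kantorovichSeq {f f' : ℝ → ℝ} {x : ℕ → ℝ} {x₀ K B η r : ℝ}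
    (hK : 0 ≤ K) (hB : 0 < B) (hf : ∀ y ∈ closedBall x₀ r, HasDerivAt f (f' y) y)
    (hlip : ∀ y ∈ closedBall x₀ r, ∀ z ∈ closedBall x₀ r, |f' y - f' z| ≤ K * |y - z|)
    (hf'x₀ : 1 / B ≤ |f' x₀|) (hη : |f x₀ / f' x₀| ≤ η)
    (ht : ∀ n, kantorovichSeq (K * B) η n ≤ r ∧ 0 < 1 - K * B * kantorovichSeq (K * B) η n)
    (hx0 : x 0 = x₀) (hx : ∀ n, x (n + 1) = x n - f (x n) / f' (x n)) (n : ℕ) :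
    |x n - x₀| ≤ kantorovichSeq (K * B) η n ∧ f' (x n) ≠ 0 ∧
      |f (x n) / f' (x n)| ≤ kantorovichSeq (K * B) η (n + 1) - kantorovichSeq (K * B) η n := by
  set t := kantorovichSeq (K * B) η
  have hmem {y : ℝ} {n : ℕ} (hy : |y - x₀| ≤ t n) : y ∈ closedBall x₀ r := by
    rw [mem_closedBall, Real.dist_eq]; exact hy.trans (ht n).1
  have hx₀ : x₀ ∈ closedBall x₀ r := hmem (n := 0) (by simp [t])
  have hlow {y : ℝ} {n : ℕ} (hy : |y - x₀| ≤ t n) : (1 - K * B * t n) / B ≤ |f' y| := by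
    have h₁ := hlip y (hmem hy) x₀ hx₀
    have h₂ := abs_sub_abs_le_abs_sub (f' x₀) (f' y)
    rw [abs_sub_comm] at h₂
    have h₃ : (1 - K * B * t n) / B = 1 / B - K * t n := by field_simp
    have h₄ := mul_le_mul_of_nonneg_left hy hK
    linarith
  have htaylor : ∀ a ∈ closedBall x₀ r, ∀ b ∈ closedBall x₀ r,
      |f b - f a - f' a * (b - a)| ≤ K / 2 * (b - a) ^ 2 := fun a ha b hb => by
    simpa [mul_comm] using (convex_closedBall x₀ r).norm_sub_sub_smul_le_of_lipschitz_deriv hf ha hb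
      fun y hy => hlip y hy a ha
  induction n with
  | zero =>
    refine ⟨by simp [hx0, t], ?_, by simpa [hx0, t] using hη⟩
    rw [hx0]; exact abs_pos.1 ((one_div_pos.2 hB).trans_le hf'x₀)
  | succ n ih =>
    obtain ⟨hxn, hf'n, hstep⟩ := ih
    have hstep' : |x (n + 1) - x n| ≤ t (n + 1) - t n := by
      rwa [hx n, sub_sub_cancel_left, abs_neg]
    have hxn₁ : |x (n + 1) - x₀| ≤ t (n + 1) := by
      linarith [abs_sub_le (x (n + 1)) (x n) x₀]
    have hlow₁ := hlow hxn₁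
    refine ⟨hxn₁, abs_pos.1 ((div_pos (ht (n + 1)).2 hB).trans_le hlow₁), ?_⟩
    -- after a Newton step, the residual is the Taylor remainder
    have hres : |f (x (n + 1))| ≤ K / 2 * (t (n + 1) - t n) ^ 2 := calc
      |f (x (n + 1))| = |f (x (n + 1)) - f (x n) - f' (x n) * (x (n + 1) - x n)| := by
        rw [hx n]; field_simp; ring_nf
      _ ≤ K / 2 * (x (n + 1) - x n) ^ 2 := htaylor _ (hmem hxn) _ (hmem hxn₁)
      _ ≤ K / 2 * (t (n + 1) - t n) ^ 2 := by
        gcongr K / 2 * ?_; exact sq_le_sq' (abs_le.1 hstep').1 (abs_le.1 hstep').2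
    have hφ : kantorovichMajorant (K * B) η (t (n + 1)) = K * B / 2 * (t (n + 1) - t n) ^ 2 :=
      kantorovichSeq.kantorovichMajorant_succ (ht n).2.ne'
    calc |f (x (n + 1)) / f' (x (n + 1))| = |f (x (n + 1))| / |f' (x (n + 1))| := abs_div _ _
      _ ≤ K / 2 * (t (n + 1) - t n) ^ 2 / ((1 - K * B * t (n + 1)) / B) :=
        div_le_div₀ (by positivity) hres (div_pos (ht (n + 1)).2 hB) hlow₁
      _ = kantorovichMajorant (K * B) η (t (n + 1)) / (1 - K * B * t (n + 1)) := by
        rw [hφ]; field_simp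
      _ = t (n + 1 + 1) - t (n + 1) := (sub_eq_of_eq_add' (kantorovichSeq.succ (n + 1))).symm

theorem kantorovich_newton_general
    (f f' f'' : ℝ → ℝ) (I : Set ℝ) (x₀ : ℝ) (K B η : ℝ)
    (hdf : ∀ x ∈ I, HasDerivAt f (f' x) x)
    (hdf' : ∀ x ∈ I, HasDerivAt f' (f'' x) x)
    (hK : 0 < K) (hbound : ∀ x ∈ I, |f'' x| ≤ K)
    (hB : 0 < B) (hf'x₀ : f' x₀ ≠ 0) (hBbound : |1 / f' x₀| ≤ B)
    (hη : |f x₀ / f' x₀| ≤ η)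
    (h : K * B * η ≤ 1 / 2)
    (hball : Metric.closedBall x₀ ((1 - Real.sqrt (1 - 2 * (K * B * η))) / (K * B)) ⊆ I) :
    ∀ newton : ℕ → ℝ,
      newton 0 = x₀ →
      (∀ n : ℕ, newton (n + 1) = newton n - f (newton n) / f' (newton n)) →
      (∀ n : ℕ, f' (newton n) ≠ 0) ∧
      (∀ n : ℕ, newton n ∈
        Metric.closedBall x₀ ((1 - Real.sqrt (1 - 2 * (K * B * η))) / (K * B))) ∧
      ∃ xs ∈ Metric.closedBall x₀ ((1 - Real.sqrt (1 - 2 * (K * B * η))) / (K * B)),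
        Tendsto newton atTop (nhds xs) ∧ f xs = 0 := by
  intro x hx0 hx
  set r := (1 - √(1 - 2 * (K * B * η))) / (K * B)
  have hc : 0 < K * B := mul_pos hK hB
  have hcη₀ : 0 ≤ K * B * η := mul_nonneg hc.le ((abs_nonneg _).trans hη)
  have ht (n : ℕ) : kantorovichSeq (K * B) η n ≤ r ∧ 0 < 1 - K * B * kantorovichSeq (K * B) η n :=
    ⟨kantorovichSeq.le_div hc hcη₀ h n, (kantorovichSeq.sqrt_le_one_sub_mul hcη₀ h n).2⟩
  have hlip : ∀ y ∈ closedBall x₀ r, ∀ z ∈ closedBall x₀ r, |f' y - f' z| ≤ K * |y - z| :=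
    fun y hy z hz => (convex_closedBall x₀ r).norm_image_sub_le_of_norm_hasDerivWithin_le
      (fun w hw => (hdf' w (hball hw)).hasDerivWithinAt) (fun w hw => hbound w (hball hw)) hz hy
  have hf'x₀B : 1 / B ≤ |f' x₀| := by
    rwa [abs_div, abs_one, div_le_iff₀ (abs_pos.2 hf'x₀), ← div_le_iff₀' hB] at hBbound
  have hmaj := abs_newton_sub_le_kantorovichSeq hK.le hB (fun y hy => hdf y (hball hy)) hlip
    hf'x₀B hη ht hx0 hx
  have hmem (n : ℕ) : x n ∈ closedBall x₀ r := by
    rw [mem_closedBall, Real.dist_eq]; exact (hmaj n).1.trans (ht n).1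
  have hcauchy : CauchySeq x := cauchySeq_of_dist_le_sub_of_monotone
    (kantorovichSeq.monotone hc hcη₀ h) (fun n => (ht n).1) fun n => by
      rw [Real.dist_eq, hx n, sub_sub_cancel]; exact (hmaj n).2.2
  obtain ⟨xs, hxs⟩ := cauchySeq_tendsto_of_complete hcauchy
  have hxsr : xs ∈ closedBall x₀ r := isClosed_closedBall.mem_of_tendsto hxs (.of_forall hmem)
  have hne (n : ℕ) : f' (x n) ≠ 0 := (hmaj n).2.1
  exact ⟨hne, hmem, xs, hxsr, hxs, eq_zero_of_tendsto_newton hx hne hxs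
    (hdf xs (hball hxsr)).continuousAt (hdf' xs (hball hxsr)).continuousAt⟩

/-- Kantorovich's convergence theorem for the Newton method (scalar case). -/
theorem kantorovich_newton
    (f f' f'' : ℝ → ℝ) (I : Set ℝ) (x₀ : ℝ) (K B η : ℝ)
    (hI : I.OrdConnected) (hx₀ : x₀ ∈ I)
    (hdf : ∀ x ∈ I, HasDerivAt f (f' x) x)
    (hdf' : ∀ x ∈ I, HasDerivAt f' (f'' x) x)
    (hf''cont : ContinuousOn f'' I)
    (hK : 0 < K) (hbound : ∀ x ∈ I, |f'' x| ≤ K)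
    (hB : 0 < B) (hf'x₀ : f' x₀ ≠ 0) (hBbound : |1 / f' x₀| ≤ B)
    (hη : |f x₀ / f' x₀| ≤ η)
    (h : K * B * η ≤ 1 / 2)
    (hball : Metric.closedBall x₀ ((1 - Real.sqrt (1 - 2 * (K * B * η))) / (K * B)) ⊆ I) :
    ∀ newton : ℕ → ℝ,
      newton 0 = x₀ →
      (∀ n : ℕ, newton (n + 1) = newton n - f (newton n) / f' (newton n)) →
      (∀ n : ℕ, f' (newton n) ≠ 0) ∧
      (∀ n : ℕ, newton n ∈
        Metric.closedBall x₀ ((1 - Real.sqrt (1 - 2 * (K * B * η))) / (K * B))) ∧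
      ∃ xs ∈ Metric.closedBall x₀ ((1 - Real.sqrt (1 - 2 * (K * B * η))) / (K * B)),
        Tendsto newton atTop (nhds xs) ∧ f xs = 0 :=
  kantorovich_newton_general f f' f'' I x₀ K B η hdf hdf' hK hbound hB hf'x₀ hBbound hη h hball
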